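/- Let C be a 7-element cap in (Z/2Z)^n whose affine span has dimension 5. Then C is complete (its quad closure equals its 5-dimensional affine span, of size 32) and there is an exclude point of C of multiplicity at least 2. -/

import Mathlib

def IsCap {n : ℕ} (S : Set (Fin n → ZMod 2)) : Prop :=
  ∀ a ∈ S, ∀ b ∈ S, ∀ c ∈ S, ∀ d ∈ S,
    a ≠ b → a ≠ c → a ≠ d → b ≠ c → b ≠ d → c ≠ d → a + b + c + d ≠ 0

def excl {n : ℕ} (S : Finset (Fin n → ZMod 2)) : Finset (Fin n → ZMod 2) :=
  (S.powersetCard 3).image (fun t => t.sum id)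

def mult {n : ℕ} (S : Finset (Fin n → ZMod 2)) (p : Fin n → ZMod 2) : ℕ :=
  ((S.powersetCard 3).filter (fun t => t.sum id = p)).card

/-!
In a cap, two distinct triples with the same sum are disjoint: otherwise their symmetric
difference is a zero-sum set of 2 or 4 points. Hence in a cap of at most 8 points every
exclude point has multiplicity at most 2, since three disjoint triples need 9 points.

The 32-point span `A` of `C` contains `C ∪ exc(C)`, a disjoint union. A point of `A` outside it
would extend `C` to an 8-cap in `A`, whose 56 triples give at least 28 exclude points: 36 points
in `A`. If all multiplicities were 1, the 35 triples of `C` would give 35 exclude points in `A`.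
-/

open Finset

section ZModTwo

variable {G : Type*} [AddCommGroup G] [Module (ZMod 2) G]

theorem Finset.sum_ne_zero_of_card_eq_two [DecidableEq G] {T : Finset G} (hT : #T = 2) :
    ∑ x ∈ T, x ≠ 0 := by
  obtain ⟨a, b, hab, rfl⟩ := card_eq_two.mp hT
  rw [sum_pair hab, ← ZModModule.sub_eq_add, sub_ne_zero]
  exact hab

theorem AffineSubspace.add_add_mem {A : AffineSubspace (ZMod 2) G} {a b c : G}
    (ha : a ∈ A) (hb : b ∈ A) (hc : c ∈ A) : a + b + c ∈ A := by
  rw [← ZModModule.sub_eq_add a b]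
  exact A.vadd_mem_of_mem_direction (A.vsub_mem_direction ha hb) hc

theorem AffineSubspace.natCard_eq_two_pow_finrank [Finite G] (A : AffineSubspace (ZMod 2) G)
    [Nonempty A] : Nat.card A = 2 ^ Module.finrank (ZMod 2) A.direction := by
  rw [← Nat.card_congr (Equiv.vaddConst (Classical.arbitrary A)),
    Module.natCard_eq_pow_finrank (K := ZMod 2), Nat.card_zmod]

end ZModTwo

variable {n : ℕ}

theorem isCap_iff_sum_ne_zero {S : Finset (Fin n → ZMod 2)} :
    IsCap (S : Set (Fin n → ZMod 2)) ↔ ∀ T ⊆ S, #T = 4 → ∑ x ∈ T, x ≠ 0 := by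
  constructor
  · intro hS T hTS hT
    obtain ⟨a, b, c, d, hab, hac, had, hbc, hbd, hcd, rfl⟩ := card_eq_four.mp hT
    simp only [insert_subset_iff, singleton_subset_iff] at hTS
    rw [sum_insert (by simp [hab, hac, had]), sum_insert (by simp [hbc, hbd]), sum_pair hcd,
      ← add_assoc, ← add_assoc]
    exact hS a hTS.1 b hTS.2.1 c hTS.2.2.1 d hTS.2.2.2 hab hac had hbc hbd hcd
  · intro h a ha b hb c hc d hd hab hac had hbc hbd hcd
    have hsub : {a, b, c, d} ⊆ S := by simp_all [insert_subset_iff]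
    have := h _ hsub (card_eq_four.mpr ⟨a, b, c, d, hab, hac, had, hbc, hbd, hcd, rfl⟩)
    rwa [sum_insert (by simp [hab, hac, had]), sum_insert (by simp [hbc, hbd]), sum_pair hcd,
      ← add_assoc, ← add_assoc] at this

theorem mem_excl {S : Finset (Fin n → ZMod 2)} {p : Fin n → ZMod 2} :
    p ∈ excl S ↔ ∃ t ⊆ S, #t = 3 ∧ ∑ x ∈ t, x = p := by
  simp [excl, mem_powersetCard, and_assoc]

theorem excl_subset_of_subset {S : Finset (Fin n → ZMod 2)}
    {A : AffineSubspace (ZMod 2) (Fin n → ZMod 2)} (hSA : (S : Set (Fin n → ZMod 2)) ⊆ A) :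
    (excl S : Set (Fin n → ZMod 2)) ⊆ A := by
  intro p hp
  obtain ⟨t, htS, ht, rfl⟩ := mem_excl.mp hp
  obtain ⟨a, b, c, hab, hac, hbc, rfl⟩ := card_eq_three.mp ht
  simp only [insert_subset_iff, singleton_subset_iff] at htS
  rw [sum_insert (by simp [hab, hac]), sum_pair hbc, ← add_assoc]
  exact A.add_add_mem (hSA htS.1) (hSA htS.2.1) (hSA htS.2.2)

theorem choose_three_le_mul_card_excl {S : Finset (Fin n → ZMod 2)} {k : ℕ}
    (hk : ∀ p ∈ excl S, mult S p ≤ k) : (#S).choose 3 ≤ k * #(excl S) := by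
  rw [← card_powersetCard]
  exact card_le_mul_card_image _ k hk

namespace IsCap

variable {S : Finset (Fin n → ZMod 2)} (hS : IsCap (S : Set (Fin n → ZMod 2)))
include hS

theorem disjoint_excl : Disjoint S (excl S) := by
  rw [disjoint_right]
  intro p hp hpS
  obtain ⟨t, htS, ht, hsum⟩ := mem_excl.mp hp
  by_cases hpt : p ∈ t
  · have h2 : #(t.erase p) = 2 := by rw [card_erase_of_mem hpt, ht]
    refine sum_ne_zero_of_card_eq_two h2 ?_
    rw [← add_right_inj p, add_sum_erase t (fun x => x) hpt]
    exact hsum.trans (add_zero p).symm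
  · refine isCap_iff_sum_ne_zero.mp hS (insert p t) (insert_subset hpS htS)
      (by rw [card_insert_of_notMem hpt, ht]) ?_
    rw [sum_insert hpt, hsum, ZModModule.add_self]

theorem card_union_excl : #(S ∪ excl S) = #S + #(excl S) :=
  card_union_of_disjoint hS.disjoint_excl

theorem insert {p : Fin n → ZMod 2} (hp : p ∉ excl S) :
    IsCap ((insert p S : Finset (Fin n → ZMod 2)) : Set (Fin n → ZMod 2)) := by
  rw [isCap_iff_sum_ne_zero]
  intro T hTS hT hsum
  by_cases hpT : p ∈ T
  · refine hp (mem_excl.mpr ⟨T.erase p, ?_, by rw [card_erase_of_mem hpT, hT], ?_⟩)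
    · rwa [← subset_insert_iff]
    · rw [← add_sum_erase T (fun x => x) hpT, ← ZModModule.sub_eq_add, sub_eq_zero] at hsum
      exact hsum.symm
  · exact isCap_iff_sum_ne_zero.mp hS T ((subset_insert_iff_of_notMem hpT).mp hTS) hT hsum

theorem disjoint_of_sum_eq {t u : Finset (Fin n → ZMod 2)} (htS : t ⊆ S) (huS : u ⊆ S)
    (ht : #t = 3) (hu : #u = 3) (htu : t ≠ u) (hsum : ∑ x ∈ t, x = ∑ x ∈ u, x) :
    Disjoint t u := by
  by_contra hdisj
  have hcard : #(t \ u) = #(u \ t) := card_sdiff_eq_card_sdiff_iff.mpr (ht.trans hu.symm)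
  have hsum' : ∑ x ∈ t \ u, x = ∑ x ∈ u \ t, x := by
    rw [← sub_eq_zero, sum_sdiff_sub_sum_sdiff, hsum, sub_self]
  have hpos : #(t \ u) ≠ 0 := fun h =>
    htu (eq_of_subset_of_card_le (sdiff_eq_empty_iff_subset.mp (card_eq_zero.mp h)) (by omega))
  have hlt : #(t \ u) ≠ 3 := fun h =>
    hdisj (Finset.sdiff_eq_self_iff_disjoint.mp (eq_of_subset_of_card_le sdiff_subset (by omega)))
  have hD : ∑ x ∈ (t \ u) ∪ (u \ t), x = 0 := by
    rw [sum_union disjoint_sdiff_sdiff, hsum', ZModModule.add_self]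
  have hDcard : #((t \ u) ∪ (u \ t)) = 2 * #(t \ u) := by
    rw [card_union_of_disjoint disjoint_sdiff_sdiff]; omega
  have hDS : (t \ u) ∪ (u \ t) ⊆ S :=
    union_subset (sdiff_subset.trans htS) (sdiff_subset.trans huS)
  have hle : #(t \ u) ≤ 3 := ht ▸ card_le_card sdiff_subset
  obtain hk | hk : #(t \ u) = 1 ∨ #(t \ u) = 2 := by omega
  · exact sum_ne_zero_of_card_eq_two (by rw [hDcard, hk]) hD
  · exact isCap_iff_sum_ne_zero.mp hS _ hDS (by rw [hDcard, hk]) hD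

theorem mult_le_two (h8 : #S ≤ 8) (p : Fin n → ZMod 2) : mult S p ≤ 2 := by
  by_contra! h
  obtain ⟨F, hF, hF3⟩ := exists_subset_card_eq h
  obtain ⟨t₁, t₂, t₃, h₁₂, h₁₃, h₂₃, rfl⟩ := card_eq_three.mp hF3
  simp only [insert_subset_iff, singleton_subset_iff, mem_filter, mem_powersetCard] at hF
  obtain ⟨⟨⟨ht₁S, ht₁⟩, hs₁⟩, ⟨⟨ht₂S, ht₂⟩, hs₂⟩, ⟨⟨ht₃S, ht₃⟩, hs₃⟩⟩ := hF
  have d₁₂ := hS.disjoint_of_sum_eq ht₁S ht₂S ht₁ ht₂ h₁₂ (hs₁.trans hs₂.symm)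
  have d₁₃ := hS.disjoint_of_sum_eq ht₁S ht₃S ht₁ ht₃ h₁₃ (hs₁.trans hs₃.symm)
  have d₂₃ := hS.disjoint_of_sum_eq ht₂S ht₃S ht₂ ht₃ h₂₃ (hs₂.trans hs₃.symm)
  have h9 : #(t₁ ∪ t₂ ∪ t₃) = 9 := by
    rw [card_union_of_disjoint (disjoint_union_left.mpr ⟨d₁₃, d₂₃⟩),
      card_union_of_disjoint d₁₂, ht₁, ht₂, ht₃]
  have := card_le_card (union_subset (union_subset ht₁S ht₂S) ht₃S)
  omega

theorem thirty_six_le_card_union_excl (h8 : #S = 8) : 36 ≤ #(S ∪ excl S) := by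
  have := choose_three_le_mul_card_excl fun p _ => hS.mult_le_two h8.le p
  rw [h8, show Nat.choose 8 3 = 56 by rfl] at this
  rw [hS.card_union_excl, h8]
  omega

end IsCap

/-- A 7-element cap whose affine span has dimension 5 is complete: its quad closure
equals its affine span (which has 32 points), and it has an exclude point of
multiplicity at least 2. -/
theorem seven_cap_dim_five {n : ℕ} (C : Finset (Fin n → ZMod 2))
    (hC : IsCap (C : Set (Fin n → ZMod 2))) (hcard : C.card = 7)
    (hdim : Module.finrank (ZMod 2)
      (affineSpan (ZMod 2) (C : Set (Fin n → ZMod 2))).direction = 5) :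
    ((C ∪ excl C : Finset (Fin n → ZMod 2)) : Set (Fin n → ZMod 2)) =
        (affineSpan (ZMod 2) (C : Set (Fin n → ZMod 2)) : Set (Fin n → ZMod 2)) ∧
      Nat.card (affineSpan (ZMod 2) (C : Set (Fin n → ZMod 2)) :
        Set (Fin n → ZMod 2)) = 32 ∧
      ∃ p ∈ excl C, 2 ≤ mult C p := by
  set A := affineSpan (ZMod 2) (C : Set (Fin n → ZMod 2))
  have hCA : (C : Set (Fin n → ZMod 2)) ⊆ A := subset_affineSpan _ _
  have hA : Nat.card A = 32 := by
    have : Nonempty A := ⟨⟨_, hCA (card_pos.mp (by omega)).choose_spec⟩⟩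
    rw [A.natCard_eq_two_pow_finrank, hdim]; rfl
  have hle : ∀ S : Finset (Fin n → ZMod 2), (S : Set (Fin n → ZMod 2)) ⊆ A →
      #(S ∪ excl S) ≤ 32 := fun S hSA => by
    rw [← hA, ← SetLike.coe_sort_coe, Nat.card_coe_set_eq, ← Set.ncard_coe_finset, coe_union]
    exact Set.ncard_le_ncard (Set.union_subset hSA (excl_subset_of_subset hSA))
  refine ⟨?_, hA, ?_⟩
  · refine subset_antisymm (coe_union C _ ▸ Set.union_subset hCA (excl_subset_of_subset hCA))
      fun x hxA => ?_
    by_contra hx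
    simp only [coe_union, Set.mem_union, mem_coe, not_or] at hx
    have h36 := (hC.insert hx.2).thirty_six_le_card_union_excl
      (by rw [card_insert_of_notMem hx.1, hcard])
    have h32 := hle (insert x C) (by rw [coe_insert]; exact Set.insert_subset hxA hCA)
    omega
  · by_contra! hmult
    have h35 := choose_three_le_mul_card_excl fun p hp => Nat.le_of_lt_succ (hmult p hp)
    have h32 := hle C hCA
    rw [hcard, show Nat.choose 7 3 = 35 by rfl] at h35
    rw [hC.card_union_excl] at h32
    omega
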